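/- Suppose in addition that λ > 0 with GᵀG ⪰ λI (positive semidefinite ordering on ℝ^{m×m}), κ_{∇c} > 0 with ‖G‖₂ ≤ κ_{∇c} (spectral norm), κ_c > 0 with ‖b‖ ≤ κ_c, κ_g > 0 with ‖g‖ ≤ κ_g, ζ > 0 and κ_H > 0 with ζI ⪯ H ⪯ κ_H I, and κ_w ∈ [0,1). Let (u,w) be the unique optimal solution of subproblem (V), v := u + Gw, and let d be the optimal solution of subproblem (D). Suppose ‖b + Gᵀv‖ ≤ κ_w‖b‖ and gᵀd + (1/2)dᵀHd > 0. Then, for any σ ∈ (0,1), the trial merit parameter value satisfies (1−σ)(‖b‖ − ‖b + Gᵀd‖)/(gᵀd + (1/2)dᵀHd) ≥ (1−σ)·κ_v/κ_{g,H}, where κ_v := min{λ²/κ_{∇c}², 2μ}·(1−κ_w)/(2κ_{∇c}) and κ_{g,H} := κ_g + (1/2)κ_H·√(4κ_{∇c}²/λ² + 1/μ)·κ_c. (This is the per-iteration estimate underlying the theorem that the algorithm's merit parameter sequence {τ_k} remains bounded away from zero, with τ_min ≥ (1−σ)κ_v(1−ε_τ)/κ_{g,H}.) -/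

import Mathlib

open Matrix

/-- Euclidean norm of a vector in `ℝᵏ` (represented as `Fin k → ℝ`). -/
noncomputable def nrm2 {k : ℕ} (a : Fin k → ℝ) : ℝ := Real.sqrt (∑ i, (a i) ^ 2)

/-- Feasibility for subproblem (V): `Gᵀu = 0` and `x + u + Gw ≥ 0`. -/
def feasV {n m : ℕ} (G : Matrix (Fin n) (Fin m) ℝ) (x : Fin n → ℝ)
    (p : (Fin n → ℝ) × (Fin m → ℝ)) : Prop :=
  Gᵀ *ᵥ p.1 = 0 ∧ 0 ≤ x + p.1 + G *ᵥ p.2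

/-- Objective of subproblem (V): `(1/2)‖b + GᵀG w‖² + (1/2)μ‖u‖²`. -/
noncomputable def objV {n m : ℕ} (G : Matrix (Fin n) (Fin m) ℝ) (b : Fin m → ℝ) (μ : ℝ)
    (p : (Fin n → ℝ) × (Fin m → ℝ)) : ℝ :=
  (1 / 2) * nrm2 (b + Gᵀ *ᵥ (G *ᵥ p.2)) ^ 2 + (1 / 2) * μ * nrm2 p.1 ^ 2

/-- Feasibility for subproblem (D): `Gᵀd = Gᵀv` and `x + d ≥ 0`. -/
def feasD {n m : ℕ} (G : Matrix (Fin n) (Fin m) ℝ) (x v d : Fin n → ℝ) : Prop :=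
  Gᵀ *ᵥ d = Gᵀ *ᵥ v ∧ 0 ≤ x + d

/-- Objective of subproblem (D): `gᵀd + (1/2)dᵀHd`. -/
noncomputable def objD {n : ℕ} (g : Fin n → ℝ) (H : Matrix (Fin n) (Fin n) ℝ)
    (d : Fin n → ℝ) : ℝ :=
  g ⬝ᵥ d + (1 / 2) * (d ⬝ᵥ (H *ᵥ d))

lemma dot_self_nonneg' {k : ℕ} (a : Fin k → ℝ) : 0 ≤ a ⬝ᵥ a :=
  Finset.sum_nonneg fun i _ => mul_self_nonneg _

lemma nrm2_nonneg {k : ℕ} (a : Fin k → ℝ) : 0 ≤ nrm2 a := Real.sqrt_nonneg _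

lemma nrm2_sq {k : ℕ} (a : Fin k → ℝ) : nrm2 a ^ 2 = a ⬝ᵥ a := by
  rw [nrm2, Real.sq_sqrt (Finset.sum_nonneg fun i _ => sq_nonneg _)]
  simp [dotProduct, sq]

lemma nrm2_eq_sqrt_dot {k : ℕ} (a : Fin k → ℝ) : nrm2 a = Real.sqrt (a ⬝ᵥ a) := by
  simp [nrm2, dotProduct, sq]

lemma dot_le_nrm2 {k : ℕ} (a c : Fin k → ℝ) : a ⬝ᵥ c ≤ nrm2 a * nrm2 c := by
  have h : (a ⬝ᵥ c)^2 ≤ (a ⬝ᵥ a) * (c ⬝ᵥ c) := by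
    simpa [dotProduct, sq] using Finset.sum_mul_sq_le_sq_mul_sq Finset.univ a c
  calc a ⬝ᵥ c ≤ |a ⬝ᵥ c| := le_abs_self _
    _ = Real.sqrt ((a ⬝ᵥ c)^2) := (Real.sqrt_sq_eq_abs _).symm
    _ ≤ Real.sqrt ((a ⬝ᵥ a) * (c ⬝ᵥ c)) := Real.sqrt_le_sqrt h
    _ = nrm2 a * nrm2 c := by
        rw [Real.sqrt_mul (dot_self_nonneg' a), ← nrm2_eq_sqrt_dot, ← nrm2_eq_sqrt_dot]

lemma nrm2_eq_zero' {k : ℕ} {a : Fin k → ℝ} (h : nrm2 a = 0) : a = 0 := by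
  have h2 : ∑ i, (a i)^2 = 0 := by
    rw [nrm2] at h
    exact (Real.sqrt_eq_zero (Finset.sum_nonneg fun i _ => sq_nonneg (a i))).mp h
  funext i
  have := (Finset.sum_eq_zero_iff_of_nonneg (fun j _ => sq_nonneg (a j))).mp h2 i
    (Finset.mem_univ i)
  exact pow_eq_zero_iff (n := 2) (by norm_num) |>.mp this

set_option maxHeartbeats 1600000 in
/-- Lower bound on the trial merit parameter value: if `‖b + Gᵀv‖ ≤ κ_w‖b‖` and
`gᵀd + (1/2)dᵀHd > 0`, then for any `σ ∈ (0,1)`,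
`(1−σ)(‖b‖ − ‖b + Gᵀd‖)/(gᵀd + (1/2)dᵀHd) ≥ (1−σ)κ_v/κ_{g,H}`, where
`κ_v = min{λ²/κ∇c², 2μ}·(1−κ_w)/(2κ∇c)` and
`κ_{g,H} = κ_g + (1/2)κ_H·√(4κ∇c²/λ² + 1/μ)·κ_c`. -/
theorem trial_merit_parameter_lower_bound
    {n m : ℕ} (G : Matrix (Fin n) (Fin m) ℝ) (b : Fin m → ℝ)
    (x : Fin n → ℝ) (μ : ℝ) (hx : 0 ≤ x) (hμ : 0 < μ)
    (hrank : Function.Injective G.mulVec)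
    (lam : ℝ) (hlam : 0 < lam)
    (hGG : (Gᵀ * G - lam • (1 : Matrix (Fin m) (Fin m) ℝ)).PosSemidef)
    (κgc : ℝ) (hκgc : 0 < κgc) (hGnorm : ∀ z : Fin m → ℝ, nrm2 (G *ᵥ z) ≤ κgc * nrm2 z)
    (κc : ℝ) (hκc : 0 < κc) (hb : nrm2 b ≤ κc)
    (g : Fin n → ℝ) (κg : ℝ) (hκg : 0 < κg) (hg : nrm2 g ≤ κg)
    (H : Matrix (Fin n) (Fin n) ℝ) (hH : H.PosDef)
    (ζ κH : ℝ) (hζ : 0 < ζ) (hκH : 0 < κH)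
    (hHζ : (H - ζ • (1 : Matrix (Fin n) (Fin n) ℝ)).PosSemidef)
    (hHκ : ((κH • (1 : Matrix (Fin n) (Fin n) ℝ)) - H).PosSemidef)
    (κw : ℝ) (hκw : κw ∈ Set.Ico (0 : ℝ) 1)
    (u : Fin n → ℝ) (w : Fin m → ℝ)
    (hfeasV : feasV G x (u, w))
    (hoptV : ∀ q, feasV G x q → objV G b μ (u, w) ≤ objV G b μ q)
    (d : Fin n → ℝ)
    (hfeasD : feasD G x (u + G *ᵥ w) d)
    (hoptD : ∀ d', feasD G x (u + G *ᵥ w) d' → objD g H d ≤ objD g H d')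
    (hres : nrm2 (b + Gᵀ *ᵥ (u + G *ᵥ w)) ≤ κw * nrm2 b)
    (hpos : 0 < g ⬝ᵥ d + (1 / 2) * (d ⬝ᵥ (H *ᵥ d)))
    (σ : ℝ) (hσ : σ ∈ Set.Ioo (0 : ℝ) 1) :
    (1 - σ) * (nrm2 b - nrm2 (b + Gᵀ *ᵥ d)) / (g ⬝ᵥ d + (1 / 2) * (d ⬝ᵥ (H *ᵥ d))) ≥
      (1 - σ) * (min (lam ^ 2 / κgc ^ 2) (2 * μ) * (1 - κw) / (2 * κgc)) /
        (κg + (1 / 2) * κH * (Real.sqrt (4 * κgc ^ 2 / lam ^ 2 + 1 / μ) * κc)) := by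
  obtain ⟨hκw0, hκw1⟩ := hκw
  obtain ⟨hσ0, hσ1⟩ := hσ
  have hGu : Gᵀ *ᵥ u = 0 := hfeasV.1
  set v : Fin n → ℝ := u + G *ᵥ w with hv
  set s : Fin m → ℝ := Gᵀ *ᵥ (G *ᵥ w) with hs
  clear_value v s
  have hGv : Gᵀ *ᵥ v = s := by rw [hv, Matrix.mulVec_add, hGu, zero_add, ← hs]
  have hGd : Gᵀ *ᵥ d = s := by rw [hfeasD.1, hGv]
  have huu0 : 0 ≤ u ⬝ᵥ u := dot_self_nonneg' u
  have hss0 : 0 ≤ s ⬝ᵥ s := dot_self_nonneg' s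
  -- u ⟂ Gw
  have hortho : u ⬝ᵥ (G *ᵥ w) = 0 := by
    rw [Matrix.dotProduct_mulVec, ← Matrix.mulVec_transpose, hGu, zero_dotProduct]
  have hgw_ws : (G *ᵥ w) ⬝ᵥ (G *ᵥ w) = w ⬝ᵥ s := by
    rw [Matrix.dotProduct_mulVec, ← Matrix.mulVec_transpose, ← hs, dotProduct_comm]
  -- quadratic lower bound from hGG
  have hlamw : lam * (w ⬝ᵥ w) ≤ w ⬝ᵥ s := by
    have h := hGG.dotProduct_mulVec_nonneg w
    rw [Matrix.sub_mulVec, Matrix.smul_mulVec, Matrix.one_mulVec,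
      ← Matrix.mulVec_mulVec, ← hs] at h
    simp only [star_trivial, dotProduct_sub, dotProduct_smul, smul_eq_mul] at h
    linarith
  have hvHv : ∀ z : Fin n → ℝ, z ⬝ᵥ (H *ᵥ z) ≤ κH * (z ⬝ᵥ z) := by
    intro z
    have h := hHκ.dotProduct_mulVec_nonneg z
    rw [Matrix.sub_mulVec, Matrix.smul_mulVec, Matrix.one_mulVec] at h
    simp only [star_trivial, dotProduct_sub, dotProduct_smul, smul_eq_mul] at h
    linarith
  -- feasibility of scaled points for (V)
  have hfeas_t : ∀ t : ℝ, 0 ≤ t → t ≤ 1 → feasV G x (t • u, t • w) := by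
    intro t ht0 ht1
    constructor
    · show Gᵀ *ᵥ (t • u) = 0
      rw [Matrix.mulVec_smul, hGu, smul_zero]
    · intro i
      have h1 := hx i
      have h2 := hfeasV.2 i
      simp only [Matrix.mulVec_smul, Pi.add_apply, Pi.smul_apply, Pi.zero_apply,
        smul_eq_mul] at h2 ⊢
      linarith only [mul_nonneg (sub_nonneg.mpr ht1) h1, mul_nonneg ht0 h2]
  -- objective along the segment
  have hobj : ∀ t : ℝ, objV G b μ (t • u, t • w)
      = 1/2 * (b ⬝ᵥ b) + (b ⬝ᵥ s) * t
        + t^2 * (1/2 * (s ⬝ᵥ s)) + t^2 * (1/2 * μ * (u ⬝ᵥ u)) := by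
    intro t
    simp only [objV]
    rw [Matrix.mulVec_smul, Matrix.mulVec_smul, ← hs, nrm2_sq, nrm2_sq]
    simp only [dotProduct_add, add_dotProduct, dotProduct_smul, smul_dotProduct, smul_eq_mul]
    rw [dotProduct_comm s b]
    ring
  -- first-order optimality consequence
  have hstar : s ⬝ᵥ s + μ * (u ⬝ᵥ u) ≤ -(b ⬝ᵥ s) := by
    set A : ℝ := 1/2 * (s ⬝ᵥ s) + 1/2 * μ * (u ⬝ᵥ u) with hA
    clear_value A
    have hA0 : 0 ≤ A := by rw [hA]; linarith only [hss0, mul_nonneg hμ.le huu0]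
    have hkey : ∀ t : ℝ, 0 ≤ t → t ≤ 1 → A + b ⬝ᵥ s ≤ A * t^2 + (b ⬝ᵥ s) * t := by
      intro t ht0 ht1
      have h := hoptV (t • u, t • w) (hfeas_t t ht0 ht1)
      rw [hobj t] at h
      have h1 : objV G b μ (u, w) = 1/2 * (b ⬝ᵥ b) + (b ⬝ᵥ s) + A := by
        have h2 := hobj 1
        simp only [one_smul] at h2
        rw [h2, hA]; ring
      rw [h1] at h
      have h3 : t^2 * (1/2 * (s ⬝ᵥ s)) + t^2 * (1/2 * μ * (u ⬝ᵥ u)) = A * t^2 := by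
        rw [hA]; ring
      linarith only [h, h3]
    by_contra hcon
    push_neg at hcon
    have h0 : A + b ⬝ᵥ s ≤ 0 := by
      have h0' := hkey 0 le_rfl zero_le_one
      simpa using h0'
    have hc : 0 < 2*A + b ⬝ᵥ s := by rw [hA]; linarith only [hcon]
    have hApos : 0 < A := by linarith only [h0, hc]
    set c : ℝ := 2*A + b ⬝ᵥ s with hcdef
    clear_value c
    have hcA : c ≤ A := by rw [hcdef]; linarith only [h0]
    have h2A : (0:ℝ) < 2*A := by linarith only [hApos]
    have hfrac : 0 < c/(2*A) := div_pos hc h2A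
    have hfrac1 : c/(2*A) ≤ 1/2 := by rw [div_le_iff₀ h2A]; linarith only [hcA]
    set t : ℝ := 1 - c/(2*A) with htdef
    clear_value t
    have ht0 : 0 ≤ t := by rw [htdef]; linarith only [hfrac1]
    have ht1 : t ≤ 1 := by rw [htdef]; linarith only [hfrac]
    have hk := hkey t ht0 ht1
    have hA' : A ≠ 0 := ne_of_gt hApos
    have hiden : A * t^2 + (b ⬝ᵥ s) * t = A + b ⬝ᵥ s - (c/(2*A)) * (c/2) := by
      rw [htdef, hcdef]; field_simp; ring
    linarith only [hk, hiden, mul_pos hfrac (by linarith only [hc] : (0:ℝ) < c/2)]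
  -- Cauchy–Schwarz consequences
  have hnb0 : 0 ≤ nrm2 b := nrm2_nonneg b
  have hns0 : 0 ≤ nrm2 s := nrm2_nonneg s
  have hbs_cs : -(b ⬝ᵥ s) ≤ nrm2 b * nrm2 s := by
    have h := dot_le_nrm2 (-b) s
    have hneg : nrm2 (-b) = nrm2 b := by simp [nrm2]
    rw [hneg, neg_dotProduct] at h
    exact h
  have h_s_le_b : nrm2 s ≤ nrm2 b := by
    have hssle : nrm2 s ^ 2 ≤ nrm2 b * nrm2 s := by
      rw [nrm2_sq]
      linarith only [hstar, hbs_cs, mul_nonneg hμ.le huu0]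
    rcases eq_or_lt_of_le hns0 with h | h
    · rw [← h]; exact hnb0
    · exact le_of_mul_le_mul_right (by linarith only [hssle]) h
  have hssbb : s ⬝ᵥ s ≤ b ⬝ᵥ b := by
    linarith only [nrm2_sq s, nrm2_sq b, mul_le_mul h_s_le_b h_s_le_b hns0 hnb0]
  have hμuu : μ * (u ⬝ᵥ u) ≤ b ⬝ᵥ b := by
    linarith only [hbs_cs, hstar, hss0, mul_le_mul_of_nonneg_left h_s_le_b hnb0, nrm2_sq b]
  -- lam * ‖w‖ ≤ ‖s‖
  have hws_cs : w ⬝ᵥ s ≤ nrm2 w * nrm2 s := dot_le_nrm2 w s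
  have hnw0 : 0 ≤ nrm2 w := nrm2_nonneg w
  have hlw : lam * nrm2 w ≤ nrm2 s := by
    rcases eq_or_lt_of_le hnw0 with h | h
    · rw [← h]; simpa using hns0
    · have h1 : lam * (nrm2 w * nrm2 w) ≤ nrm2 w * nrm2 s := by
        have h2 : lam * (w ⬝ᵥ w) ≤ nrm2 w * nrm2 s := le_trans hlamw hws_cs
        rw [← nrm2_sq] at h2; linarith only [h2]
      exact le_of_mul_le_mul_left (by linarith only [h1]) h
  have hgw2 : lam^2 * ((G *ᵥ w) ⬝ᵥ (G *ᵥ w)) ≤ κgc^2 * (s ⬝ᵥ s) := by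
    have h1 : nrm2 (G *ᵥ w) ≤ κgc * nrm2 w := hGnorm w
    have h3 : (G *ᵥ w) ⬝ᵥ (G *ᵥ w) = nrm2 (G *ᵥ w) ^ 2 := (nrm2_sq _).symm
    have h4 : s ⬝ᵥ s = nrm2 s ^ 2 := (nrm2_sq _).symm
    rw [h3, h4]
    linarith only [mul_le_mul_of_nonneg_left
        (mul_le_mul h1 h1 (nrm2_nonneg (G *ᵥ w)) (by positivity)) (sq_nonneg lam),
      mul_le_mul_of_nonneg_left
        (mul_le_mul hlw hlw (by positivity) hns0) (sq_nonneg κgc)]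
  -- expansion identities
  have hexp : (b + s) ⬝ᵥ (b + s) = b ⬝ᵥ b + 2*(b ⬝ᵥ s) + s ⬝ᵥ s := by
    simp only [dotProduct_add, add_dotProduct]
    rw [dotProduct_comm s b]; ring
  have hvv : v ⬝ᵥ v = u ⬝ᵥ u + (G *ᵥ w) ⬝ᵥ (G *ᵥ w) := by
    rw [hv]
    simp only [dotProduct_add, add_dotProduct]
    rw [dotProduct_comm (G *ᵥ w) u, hortho]; ring
  -- the K bound
  set K : ℝ := min (lam ^ 2 / κgc ^ 2) (2 * μ) with hK
  clear_value K
  have hK1 : K ≤ lam^2/κgc^2 := hK ▸ min_le_left _ _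
  have hK2 : K ≤ 2*μ := hK ▸ min_le_right _ _
  have hKpos : 0 < K := hK ▸ lt_min (by positivity) (by linarith)
  have hgwgw0 : 0 ≤ (G *ᵥ w) ⬝ᵥ (G *ᵥ w) := dot_self_nonneg' _
  have hKgw : K * ((G *ᵥ w) ⬝ᵥ (G *ᵥ w)) ≤ s ⬝ᵥ s := by
    have hdiv : (lam^2/κgc^2) * ((G *ᵥ w) ⬝ᵥ (G *ᵥ w)) ≤ s ⬝ᵥ s := by
      rw [div_mul_eq_mul_div, div_le_iff₀ (by positivity)]
      linarith only [hgw2]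
    linarith only [mul_le_mul_of_nonneg_right hK1 hgwgw0, hdiv]
  have hKvbb : K * (v ⬝ᵥ v) ≤ b ⬝ᵥ b := by
    have hKv : K * (v ⬝ᵥ v) ≤ b ⬝ᵥ b - (b + s) ⬝ᵥ (b + s) := by
      rw [hvv, hexp]
      linarith only [mul_le_mul_of_nonneg_right hK2 huu0, hKgw, hstar]
    have hbps0 : 0 ≤ (b + s) ⬝ᵥ (b + s) := dot_self_nonneg' _
    linarith only [hKv, hbps0]
  -- v is feasible for (D)
  have hxv : feasD G x v v := by
    refine ⟨rfl, ?_⟩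
    rw [hv, ← add_assoc]
    exact hfeasV.2
  have hPv := hoptD v hxv
  simp only [objD] at hPv
  -- v ≠ 0
  have hnv0 : 0 < nrm2 v := by
    rcases eq_or_lt_of_le (nrm2_nonneg v) with h | h
    · exfalso
      have hv0 : v = 0 := nrm2_eq_zero' h.symm
      rw [hv0] at hPv
      simp only [dotProduct_zero, Matrix.mulVec_zero, zero_dotProduct,
        mul_zero, add_zero] at hPv
      linarith only [hPv, hpos]
    · exact h
  have hvv_pos : 0 < v ⬝ᵥ v := by rw [← nrm2_sq]; exact pow_pos hnv0 2
  have hbbpos : 0 < b ⬝ᵥ b := lt_of_lt_of_le (mul_pos hKpos hvv_pos) hKvbb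
  have hnbpos : 0 < nrm2 b := by
    rcases eq_or_lt_of_le hnb0 with h | h
    · exfalso; rw [← nrm2_sq, ← h] at hbbpos; simp at hbbpos
    · exact h
  -- m is nonempty and lam ≤ κgc²
  have hmne : Nonempty (Fin m) := by
    by_contra hne
    haveI := not_nonempty_iff.mp hne
    have : b ⬝ᵥ b = 0 := by simp [dotProduct]
    rw [this] at hbbpos; exact lt_irrefl 0 hbbpos
  have hlk : lam ≤ κgc^2 := by
    obtain ⟨i0⟩ := hmne
    set z : Fin m → ℝ := Pi.single i0 1 with hz
    have hzz : z ⬝ᵥ z = 1 := by simp [hz, dotProduct, Pi.single_apply]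
    have h1 : lam * (z ⬝ᵥ z) ≤ z ⬝ᵥ ((Gᵀ*G) *ᵥ z) := by
      have h := hGG.dotProduct_mulVec_nonneg z
      rw [Matrix.sub_mulVec, Matrix.smul_mulVec, Matrix.one_mulVec] at h
      simp only [star_trivial, dotProduct_sub, dotProduct_smul, smul_eq_mul] at h
      linarith only [h]
    have h2 : z ⬝ᵥ ((Gᵀ*G) *ᵥ z) = (G *ᵥ z) ⬝ᵥ (G *ᵥ z) := by
      rw [← Matrix.mulVec_mulVec, Matrix.dotProduct_mulVec, Matrix.vecMul_transpose]
    have h3 : nrm2 (G *ᵥ z) ≤ κgc * nrm2 z := hGnorm z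
    have hnz : nrm2 z = 1 := by rw [nrm2_eq_sqrt_dot, hzz, Real.sqrt_one]
    have h4 : (G *ᵥ z) ⬝ᵥ (G *ᵥ z) ≤ κgc^2 := by
      rw [← nrm2_sq]
      rw [hnz, mul_one] at h3
      linarith only [mul_le_mul h3 h3 (nrm2_nonneg (G *ᵥ z)) hκgc.le]
    rw [hzz, mul_one, h2] at h1
    linarith only [h1, h4]
  -- √K bounds
  have hsqK : Real.sqrt K ≤ 2*κgc := by
    have h1 : Real.sqrt K ≤ Real.sqrt (lam^2/κgc^2) := Real.sqrt_le_sqrt hK1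
    have h2 : Real.sqrt (lam^2/κgc^2) = lam/κgc := by
      rw [show lam^2/κgc^2 = (lam/κgc)^2 by ring, Real.sqrt_sq (by positivity)]
    have h3 : lam/κgc ≤ κgc := by rw [div_le_iff₀ hκgc]; linarith only [hlk]
    linarith only [h1, h2, h3, hκgc]
  have hsqK0 : 0 ≤ Real.sqrt K := Real.sqrt_nonneg _
  have hKsq : K = Real.sqrt K * Real.sqrt K := (Real.mul_self_sqrt hKpos.le).symm
  have hbv : Real.sqrt K * nrm2 v ≤ nrm2 b := by
    have h1 : (Real.sqrt K * nrm2 v)^2 ≤ nrm2 b ^ 2 := by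
      rw [mul_pow, Real.sq_sqrt hKpos.le, nrm2_sq, nrm2_sq]; exact hKvbb
    have h2 := Real.sqrt_le_sqrt h1
    rwa [Real.sqrt_sq (mul_nonneg hsqK0 (nrm2_nonneg v)), Real.sqrt_sq hnb0] at h2
  -- residual bound
  rw [hGv] at hres
  -- numerator lower bound
  have hNv : K*(1-κw)/(2*κgc) * nrm2 v ≤ nrm2 b - nrm2 (b + s) := by
    have hKle : K ≤ Real.sqrt K * (2*κgc) := by
      linarith only [mul_le_mul_of_nonneg_left hsqK hsqK0, hKsq]
    rw [div_mul_eq_mul_div, div_le_iff₀ (by positivity)]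
    have hbig : (1-κw) * nrm2 b ≤ nrm2 b - nrm2 (b + s) := by linarith only [hres]
    linarith only [mul_le_mul_of_nonneg_right hKle
        (mul_nonneg (by linarith only [hκw1] : (0:ℝ) ≤ 1-κw) (nrm2_nonneg v)),
      mul_le_mul_of_nonneg_left hbv
        (mul_nonneg (by positivity : (0:ℝ) ≤ 2*κgc) (by linarith only [hκw1] : (0:ℝ) ≤ 1-κw)),
      mul_le_mul_of_nonneg_left hbig (by positivity : (0:ℝ) ≤ 2*κgc)]
  -- ‖v‖ ≤ R
  have huubb : u ⬝ᵥ u ≤ (1/μ) * (b ⬝ᵥ b) := by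
    rw [one_div, inv_mul_eq_div, le_div_iff₀ hμ]
    linarith only [hμuu]
  have hgwbb : (G *ᵥ w) ⬝ᵥ (G *ᵥ w) ≤ (κgc^2/lam^2) * (b ⬝ᵥ b) := by
    rw [div_mul_eq_mul_div, le_div_iff₀ (by positivity)]
    linarith only [hgw2, mul_le_mul_of_nonneg_left hssbb (sq_nonneg κgc)]
  have hbbκc : b ⬝ᵥ b ≤ κc^2 := by
    linarith only [nrm2_sq b, mul_le_mul hb hb hnb0 hκc.le]
  have hvvR : v ⬝ᵥ v ≤ (4*κgc^2/lam^2 + 1/μ) * κc^2 := by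
    rw [hvv]
    have h1 : (κgc^2/lam^2) * (b ⬝ᵥ b) ≤ (κgc^2/lam^2) * κc^2 :=
      mul_le_mul_of_nonneg_left hbbκc (by positivity)
    have h2 : (1/μ) * (b ⬝ᵥ b) ≤ (1/μ) * κc^2 :=
      mul_le_mul_of_nonneg_left hbbκc (by positivity)
    have h3 : (κgc^2/lam^2) * κc^2 ≤ (4*κgc^2/lam^2) * κc^2 := by
      apply mul_le_mul_of_nonneg_right _ (sq_nonneg κc)
      apply div_le_div_of_nonneg_right ?_ (by positivity)
      · linarith only [sq_nonneg κgc]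
    have h4 : (4*κgc^2/lam^2 + 1/μ) * κc^2 = (4*κgc^2/lam^2)*κc^2 + (1/μ)*κc^2 := by ring
    linarith only [huubb, hgwbb, h1, h2, h3, h4]
  have hvR : nrm2 v ≤ Real.sqrt (4*κgc^2/lam^2 + 1/μ) * κc := by
    rw [nrm2_eq_sqrt_dot]
    have h1 : Real.sqrt (v ⬝ᵥ v) ≤ Real.sqrt ((4*κgc^2/lam^2 + 1/μ) * κc^2) :=
      Real.sqrt_le_sqrt hvvR
    rwa [Real.sqrt_mul (by positivity), Real.sqrt_sq hκc.le] at h1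
  -- objective upper bound
  have hgv : g ⬝ᵥ v ≤ κg * nrm2 v :=
    le_trans (dot_le_nrm2 g v) (mul_le_mul_of_nonneg_right hg (nrm2_nonneg v))
  have hvHv' : v ⬝ᵥ (H *ᵥ v) ≤ κH * (v ⬝ᵥ v) := hvHv v
  have hvvnv : v ⬝ᵥ v ≤ (Real.sqrt (4*κgc^2/lam^2 + 1/μ) * κc) * nrm2 v := by
    linarith only [nrm2_sq v, mul_le_mul_of_nonneg_right hvR (nrm2_nonneg v)]
  have hPle : g ⬝ᵥ d + (1/2) * (d ⬝ᵥ (H *ᵥ d)) ≤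
      (κg + (1/2)*κH*(Real.sqrt (4*κgc^2/lam^2 + 1/μ)*κc)) * nrm2 v := by
    linarith only [hPv, hgv, mul_le_mul_of_nonneg_left hvvnv
      (by positivity : (0:ℝ) ≤ (1/2)*κH), mul_le_mul_of_nonneg_left hvHv'
      (by positivity : (0:ℝ) ≤ (1/2:ℝ))]
  -- conclusion
  have hκgH : 0 < κg + (1/2)*κH*(Real.sqrt (4*κgc^2/lam^2 + 1/μ)*κc) := by positivity
  have hKv0 : 0 ≤ K*(1-κw)/(2*κgc) :=
    div_nonneg (mul_nonneg hKpos.le (by linarith)) (by positivity)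
  rw [hGd, ge_iff_le, div_le_div_iff₀ hκgH hpos]
  have hmain : (K*(1-κw)/(2*κgc)) * (g ⬝ᵥ d + (1/2)*(d ⬝ᵥ (H *ᵥ d))) ≤
      (nrm2 b - nrm2 (b + s)) * (κg + (1/2)*κH*(Real.sqrt (4*κgc^2/lam^2 + 1/μ)*κc)) := by
    linarith only [mul_le_mul_of_nonneg_left hPle hKv0,
      mul_le_mul_of_nonneg_right hNv hκgH.le]
  linarith only [mul_le_mul_of_nonneg_left hmain (by linarith only [hσ1] : (0:ℝ) ≤ 1-σ)]
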